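/- arXiv:1104.4455 — 6 statements merged into one kernel-verified Lean document; each statement's English description precedes it below -/
import Mathlib

section
/- Let A ∈ Mₙ(H) be written A = A₁ + A₂·j with A₁, A₂ ∈ Mₙ(ℂ). For λ ∈ ℂ and X = Y + Z·j with Y, Z ∈ ℂⁿ, the equation AX = Xλ holds if and only if the complex 2n×2n matrix A' = [[A₁, A₂],[-conj(A₂), conj(A₁)]] satisfies A'·(Y, -conj(Z))ᵀ = λ·(Y, -conj(Z))ᵀ. -/
open Quaternion Matrix

/-- The embedding of `ℂ` into the quaternions, identifying `1` and `i`. -/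
def cq (z : ℂ) : ℍ[ℝ] := ⟨z.re, z.im, 0, 0⟩

/-- The quaternion `j`. -/
def jq : ℍ[ℝ] := ⟨0, 0, 1, 0⟩

/-! Write quaternions as `p + q j` with `p, q ∈ ℂ`. Since `j z = conj z · j` and `j² = -1`,
`(a + b j)(c + d j) = (a c - b conj d) + (a d + b conj c) j`, so `A X = X λ` splits into the two
complex equations `A₁ Y - A₂ conj Z = λ Y` and `A₁ Z + A₂ conj Y = conj λ · Z`. The first is the
top block row of `A' (Y, -conj Z) = λ (Y, -conj Z)`; the complex conjugate of the second is,
up to sign, the bottom block row. -/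

theorem Sum.smul_elim {α β γ M : Type*} [SMul M γ] (c : M) (u : α → γ) (v : β → γ) :
    c • Sum.elim u v = Sum.elim (c • u) (c • v) := by
  ext (_ | _) <;> rfl

theorem Matrix.star_mulVec_eq_map_mulVec_star {m n R : Type*} [Fintype n] [CommSemiring R]
    [StarRing R] (M : Matrix m n R) (v : n → R) :
    star (M *ᵥ v) = M.map (starRingEnd R) *ᵥ star v :=
  funext (RingHom.map_mulVec (starRingEnd R) M v)

@[simp] theorem cq_re (z : ℂ) : (cq z).re = z.re := rfl
@[simp] theorem cq_imI (z : ℂ) : (cq z).imI = z.im := rfl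
@[simp] theorem cq_imJ (z : ℂ) : (cq z).imJ = 0 := rfl
@[simp] theorem cq_imK (z : ℂ) : (cq z).imK = 0 := rfl
@[simp] theorem jq_re : jq.re = 0 := rfl
@[simp] theorem jq_imI : jq.imI = 0 := rfl
@[simp] theorem jq_imJ : jq.imJ = 1 := rfl
@[simp] theorem jq_imK : jq.imK = 0 := rfl

def cqHom : ℂ →+* ℍ[ℝ] where
  toFun := cq
  map_one' := by ext <;> simp
  map_mul' _ _ := by ext <;> simp
  map_zero' := by ext <;> simp
  map_add' _ _ := by ext <;> simp

theorem cq_sum {ι : Type*} (s : Finset ι) (f : ι → ℂ) : cq (∑ i ∈ s, f i) = ∑ i ∈ s, cq (f i) :=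
  map_sum cqHom f s

theorem cq_add_cq_mul_jq_inj {p q p' q' : ℂ} :
    cq p + cq q * jq = cq p' + cq q' * jq ↔ p = p' ∧ q = q' := by
  simp [Quaternion.ext_iff, Complex.ext_iff, and_assoc]

theorem cq_add_cq_mul_jq_mul (a b c d : ℂ) :
    (cq a + cq b * jq) * (cq c + cq d * jq)
      = cq (a * c - b * star d) + cq (a * d + b * star c) * jq := by
  ext <;> simp <;> ring

theorem cq_add_cq_mul_jq_mul_cq (y z l : ℂ) :
    (cq y + cq z * jq) * cq l = cq (y * l) + cq (z * star l) * jq := by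
  ext <;> simp

section

variable {m : Type*} [Fintype m] (A₁ A₂ : Matrix m m ℂ) (Y Z : m → ℂ)

theorem mulVec_cq_add_cq_mul_jq :
    Matrix.of (fun i j => cq (A₁ i j) + cq (A₂ i j) * jq) *ᵥ (fun i => cq (Y i) + cq (Z i) * jq)
      = fun i => cq ((A₁ *ᵥ Y - A₂ *ᵥ star Z) i) + cq ((A₁ *ᵥ Z + A₂ *ᵥ star Y) i) * jq := by
  ext1 i
  simp only [mulVec, dotProduct, of_apply, cq_add_cq_mul_jq_mul, Pi.sub_apply, Pi.add_apply,
    Pi.star_apply, ← Finset.sum_sub_distrib, ← Finset.sum_add_distrib, cq_sum, Finset.sum_mul]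

theorem quaternion_right_eigen_iff (lam : ℂ) :
    (Matrix.of (fun i j => cq (A₁ i j) + cq (A₂ i j) * jq) *ᵥ (fun i => cq (Y i) + cq (Z i) * jq)
      = fun i => (cq (Y i) + cq (Z i) * jq) * cq lam)
    ↔ A₁ *ᵥ Y - A₂ *ᵥ star Z = lam • Y ∧ A₁ *ᵥ Z + A₂ *ᵥ star Y = star lam • Z := by
  simp only [mulVec_cq_add_cq_mul_jq, cq_add_cq_mul_jq_mul_cq, funext_iff, cq_add_cq_mul_jq_inj,
    forall_and, Pi.smul_apply, smul_eq_mul, mul_comm]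

theorem fromBlocks_mulVec_sumElim_eq_smul_iff (lam : ℂ) :
    fromBlocks A₁ A₂ (-A₂.map (starRingEnd ℂ)) (A₁.map (starRingEnd ℂ)) *ᵥ Sum.elim Y (-star Z)
      = lam • Sum.elim Y (-star Z)
    ↔ A₁ *ᵥ Y - A₂ *ᵥ star Z = lam • Y
      ∧ A₁.map (starRingEnd ℂ) *ᵥ star Z + A₂.map (starRingEnd ℂ) *ᵥ Y = lam • star Z := by
  rw [fromBlocks_mulVec, Sum.smul_elim, Sum.elim_eq_iff]
  simp only [Sum.elim_comp_inl, Sum.elim_comp_inr, mulVec_neg, neg_mulVec, ← sub_eq_add_neg,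
    smul_neg, ← neg_add', neg_inj, add_comm (A₁.map _ *ᵥ _)]

theorem mulVec_add_mulVec_star_eq_star_smul_iff (lam : ℂ) :
    A₁ *ᵥ Z + A₂ *ᵥ star Y = star lam • Z
      ↔ A₁.map (starRingEnd ℂ) *ᵥ star Z + A₂.map (starRingEnd ℂ) *ᵥ Y = lam • star Z := by
  rw [← star_inj, star_add, StarModule.star_smul, star_star, star_mulVec_eq_map_mulVec_star,
    star_mulVec_eq_map_mulVec_star, star_star]

end

/-- For `A = A₁ + A₂ j` and `X = Y + Z j`, the right eigenvalue equation `A X = X λ`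
holds iff the associated complex `2n × 2n` matrix
`A' = [[A₁, A₂], [-conj A₂, conj A₁]]` satisfies `A' (Y, -conj Z)ᵀ = λ (Y, -conj Z)ᵀ`. -/
theorem quaternionic_eigen_iff_complex_eigen {n : ℕ}
    (A₁ A₂ : Matrix (Fin n) (Fin n) ℂ) (Y Z : Fin n → ℂ) (lam : ℂ) :
    (Matrix.mulVec (Matrix.of fun i j => cq (A₁ i j) + cq (A₂ i j) * jq)
        (fun i => cq (Y i) + cq (Z i) * jq)
      = fun i => (cq (Y i) + cq (Z i) * jq) * cq lam)
    ↔ (Matrix.fromBlocks A₁ A₂ (-(A₂.map (starRingEnd ℂ))) (A₁.map (starRingEnd ℂ))).mulVec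
        (Sum.elim Y (fun i => -(starRingEnd ℂ (Z i))))
      = lam • Sum.elim Y (fun i => -(starRingEnd ℂ (Z i))) := by
  rw [quaternion_right_eigen_iff, mulVec_add_mulVec_star_eq_star_smul_iff]
  exact (fromBlocks_mulVec_sumElim_eq_smul_iff A₁ A₂ Y Z lam).symm
end

section
/- Fix z₀ ∈ H and let u be distributed according to the Haar measure on the group of unit quaternions. Then the random quaternion u z₀ u* has the same law as Re(z₀) + |Im(z₀)|·S, where S is uniformly distributed on the unit sphere of the purely imaginary quaternions H₀. -/
/-!
Write `z₀ = Re z₀ + |Im z₀| p` with `p² = -1`, i.e. `p` a unit imaginary quaternion (any one if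
`Im z₀ = 0`). Conjugation by a unit fixes the real part, so it suffices to show that `u p u*` has
law `σ`. Unit quaternions act transitively by conjugation on the roots of `-1`: if `s ≠ -p` then
`(s + p) p = s (s + p)`, and `-p` is reached through a third root. A Fubini argument then shows
that every conjugation-invariant probability measure on the roots of `-1` is the law of `u* p u`;
both `σ` and the law of `u p u*` are such measures.
-/

open Quaternion MeasureTheory

namespace MeasureTheory.Measure

variable {α β : Type*} [MeasurableSpace α] [MeasurableSpace β]

theorem eq_of_ae_map_eq_self_of_ae_map_orbit_eq {μ : Measure α} {ρ ν : Measure β}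
    [IsProbabilityMeasure μ] [IsProbabilityMeasure ρ] {act : α → β → β}
    (hact : Measurable (Function.uncurry act)) (hinv : ∀ᵐ g ∂μ, ρ.map (act g) = ρ)
    (horbit : ∀ᵐ x ∂ρ, μ.map (fun g => act g x) = ν) : ρ = ν := by
  ext A hA
  have hpre : MeasurableSet (Function.uncurry act ⁻¹' A) := hact hA
  calc ρ A = ∫⁻ g, ρ.map (act g) A ∂μ := by
        rw [lintegral_congr_ae (hinv.mono fun g hg => by rw [hg]), lintegral_const,
          measure_univ, mul_one]
    _ = μ.prod ρ (Function.uncurry act ⁻¹' A) := by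
        rw [prod_apply hpre]
        exact lintegral_congr fun g => map_apply (hact.comp measurable_prodMk_left) hA
    _ = ∫⁻ x, μ.map (fun g => act g x) A ∂ρ := by
        rw [prod_apply_symm hpre]
        exact lintegral_congr fun x => (map_apply (hact.comp measurable_prodMk_right) hA).symm
    _ = ν A := by
        rw [lintegral_congr_ae (horbit.mono fun x hx => by rw [hx]), lintegral_const,
          measure_univ, mul_one]

end MeasureTheory.Measure

namespace Quaternion

variable {p s u w : ℍ[ℝ]}

theorem mul_star_eq_one_of_norm_eq_one (hu : ‖u‖ = 1) : u * star u = 1 := by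
  rw [self_mul_star, normSq_eq_norm_mul_self, hu, mul_one, coe_one]

theorem star_mul_eq_one_of_norm_eq_one (hu : ‖u‖ = 1) : star u * u = 1 := by
  rw [star_mul_self, normSq_eq_norm_mul_self, hu, mul_one, coe_one]

theorem mul_self_eq_neg_one_iff : p * p = -1 ↔ p.re = 0 ∧ ‖p‖ = 1 := by
  rw [← sq_eq_neg_normSq, normSq_eq_norm_mul_self, sq]
  constructor
  · intro h
    have hn : ‖p‖ * ‖p‖ = 1 := by simpa using congrArg norm h
    have h1 : ‖p‖ = 1 := by nlinarith [norm_nonneg p]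
    simp [h, h1]
  · rintro ⟨h, h1⟩
    simp [h, h1]

theorem conj_mul_conj (hu : ‖u‖ = 1) (a b : ℍ[ℝ]) :
    u * a * star u * (u * b * star u) = u * (a * b) * star u := by
  simp only [mul_assoc]
  rw [← mul_assoc (star u) u, star_mul_eq_one_of_norm_eq_one hu, one_mul]

theorem exists_norm_eq_one_conj_eq_of_semiconjBy (hw : w ≠ 0) (h : SemiconjBy w p s) :
    ∃ v : ℍ[ℝ], ‖v‖ = 1 ∧ v * p * star v = s := by
  have hw' : ‖w‖ ≠ 0 := norm_ne_zero_iff.mpr hw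
  refine ⟨‖w‖⁻¹ • w, by rw [norm_smul, norm_inv, norm_norm, inv_mul_cancel₀ hw'], ?_⟩
  rw [Quaternion.star_smul, smul_mul_assoc, smul_mul_assoc, mul_smul_comm, smul_smul, h.eq,
    mul_assoc, self_mul_star, mul_coe_eq_smul, smul_smul, normSq_eq_norm_mul_self,
    show ‖w‖⁻¹ * ‖w‖⁻¹ * (‖w‖ * ‖w‖) = 1 by field_simp, one_smul]

theorem exists_norm_eq_one_conj_eq_of_add_ne_zero (hp : p * p = -1) (hs : s * s = -1)
    (hsp : s + p ≠ 0) : ∃ v : ℍ[ℝ], ‖v‖ = 1 ∧ v * p * star v = s :=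
  exists_norm_eq_one_conj_eq_of_semiconjBy hsp <| by
    rw [SemiconjBy, add_mul, mul_add, hp, hs]
    abel

theorem exists_mul_self_eq_neg_one_ne_and_ne_neg (p : ℍ[ℝ]) :
    ∃ t : ℍ[ℝ], t * t = -1 ∧ t ≠ p ∧ t ≠ -p := by
  have hi : (⟨0, 1, 0, 0⟩ : ℍ[ℝ]) * ⟨0, 1, 0, 0⟩ = -1 := by
    ext <;> norm_num [re_mul, imI_mul, imJ_mul, imK_mul]
  have hj : (⟨0, 0, 1, 0⟩ : ℍ[ℝ]) * ⟨0, 0, 1, 0⟩ = -1 := by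
    ext <;> norm_num [re_mul, imI_mul, imJ_mul, imK_mul]
  by_cases hp : p.imJ = 0
  · refine ⟨_, hj, fun h => ?_, fun h => ?_⟩ <;> simpa [hp] using congrArg QuaternionAlgebra.imJ h
  · refine ⟨_, hi, fun h => ?_, fun h => ?_⟩ <;>
      simpa [eq_comm, hp] using congrArg QuaternionAlgebra.imJ h

theorem exists_norm_eq_one_conj_eq (hp : p * p = -1) (hs : s * s = -1) :
    ∃ v : ℍ[ℝ], ‖v‖ = 1 ∧ v * p * star v = s := by
  by_cases hsp : s + p = 0
  · obtain ⟨t, ht, htp, htp'⟩ := exists_mul_self_eq_neg_one_ne_and_ne_neg p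
    obtain ⟨v₁, hv₁, hv₁p⟩ := exists_norm_eq_one_conj_eq_of_add_ne_zero hp ht
      (by rwa [Ne, add_eq_zero_iff_eq_neg])
    obtain ⟨v₂, hv₂, hv₂t⟩ := exists_norm_eq_one_conj_eq_of_add_ne_zero ht hs
      (by rw [eq_neg_of_add_eq_zero_left hsp, Ne, neg_add_eq_zero]; exact htp.symm)
    refine ⟨v₂ * v₁, by rw [norm_mul, hv₁, hv₂, one_mul], ?_⟩
    rw [← hv₂t, ← hv₁p, star_mul]
    simp only [mul_assoc]
  · exact exists_norm_eq_one_conj_eq_of_add_ne_zero hp hs hsp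

theorem exists_im_eq_norm_smul (a : ℍ[ℝ]) :
    ∃ p : ℍ[ℝ], p * p = -1 ∧ a.im = ‖a.im‖ • p := by
  by_cases ha : a.im = 0
  · obtain ⟨t, ht, -⟩ := exists_mul_self_eq_neg_one_ne_and_ne_neg a
    exact ⟨t, ht, by rw [ha, norm_zero, zero_smul]⟩
  · refine ⟨‖a.im‖⁻¹ • a.im, mul_self_eq_neg_one_iff.2 ⟨by simp, norm_smul_inv_norm ha⟩, ?_⟩
    rw [smul_smul, mul_inv_cancel₀ (norm_ne_zero_iff.2 ha), one_smul]

theorem conj_eq_re_add_conj_im (hu : ‖u‖ = 1) (a : ℍ[ℝ]) :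
    u * a * star u = a.re + u * a.im * star u := by
  conv_lhs => rw [← re_add_im a]
  rw [mul_add, add_mul, ← coe_commutes, mul_assoc, mul_star_eq_one_of_norm_eq_one hu, mul_one]

end Quaternion

section ConjugationLaw

variable [MeasurableSpace ℍ[ℝ]] [BorelSpace ℍ[ℝ]] {μG : Measure ℍ[ℝ]}

theorem map_star_conj_conj_eq
    (hμGinv : ∀ v : ℍ[ℝ], ‖v‖ = 1 → Measure.map (fun u => v * u) μG = μG)
    {v : ℍ[ℝ]} (hv : ‖v‖ = 1) (p : ℍ[ℝ]) :
    μG.map (fun u => star u * (v * p * star v) * u) = μG.map (fun u => star u * p * u) := by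
  have hcomp : (fun u => star u * (v * p * star v) * u)
      = (fun w => star w * p * w) ∘ (fun u => star v * u) := by
    funext u
    simp only [Function.comp, star_mul, star_star, mul_assoc]
  rw [hcomp, ← Measure.map_map (by fun_prop) (by fun_prop), hμGinv _ (by rwa [norm_star])]

theorem eq_map_star_conj_of_conj_invariant [IsProbabilityMeasure μG]
    (hμG : ∀ᵐ u ∂μG, ‖u‖ = 1)
    (hμGinv : ∀ v : ℍ[ℝ], ‖v‖ = 1 → Measure.map (fun u => v * u) μG = μG)
    {p : ℍ[ℝ]} (hp : p * p = -1) {ρ : Measure ℍ[ℝ]} [IsProbabilityMeasure ρ]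
    (hρ : ∀ᵐ s ∂ρ, s * s = -1)
    (hρinv : ∀ v : ℍ[ℝ], ‖v‖ = 1 → Measure.map (fun s => v * s * star v) ρ = ρ) :
    ρ = μG.map (fun u => star u * p * u) := by
  refine Measure.eq_of_ae_map_eq_self_of_ae_map_orbit_eq (μ := μG) (ρ := ρ)
    (act := fun u s => star u * s * u) (by fun_prop) ?_ ?_
  · filter_upwards [hμG] with u hu
    simpa using hρinv (star u) (by rwa [norm_star])
  · filter_upwards [hρ] with s hs
    obtain ⟨v, hv, rfl⟩ := exists_norm_eq_one_conj_eq hp hs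
    exact map_star_conj_conj_eq hμGinv hv p

theorem map_conj_eq_of_conj_invariant [IsProbabilityMeasure μG]
    (hμG : ∀ᵐ u ∂μG, ‖u‖ = 1)
    (hμGinv : ∀ v : ℍ[ℝ], ‖v‖ = 1 → Measure.map (fun u => v * u) μG = μG)
    {p : ℍ[ℝ]} (hp : p * p = -1) {σ : Measure ℍ[ℝ]} [IsProbabilityMeasure σ]
    (hσ : ∀ᵐ s ∂σ, s * s = -1)
    (hσinv : ∀ v : ℍ[ℝ], ‖v‖ = 1 → Measure.map (fun s => v * s * star v) σ = σ) :
    μG.map (fun u => u * p * star u) = σ := by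
  have hconj : Measurable fun u : ℍ[ℝ] => u * p * star u := by fun_prop
  have : IsProbabilityMeasure (μG.map fun u => u * p * star u) :=
    Measure.isProbabilityMeasure_map hconj.aemeasurable
  rw [eq_map_star_conj_of_conj_invariant hμG hμGinv hp hσ hσinv]
  refine eq_map_star_conj_of_conj_invariant hμG hμGinv hp ?_ fun v hv => ?_
  · rw [ae_map_iff hconj.aemeasurable
      (measurableSet_eq_fun (by fun_prop) measurable_const)]
    filter_upwards [hμG] with u hu
    rw [conj_mul_conj hu, hp, mul_neg_one, neg_mul, mul_star_eq_one_of_norm_eq_one hu]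
  · have hcomp : (fun s => v * s * star v) ∘ (fun u => u * p * star u)
        = (fun u => u * p * star u) ∘ (fun u => v * u) := by
      funext u
      simp only [Function.comp, star_mul, mul_assoc]
    rw [Measure.map_map (by fun_prop) hconj, hcomp, ← Measure.map_map hconj (by fun_prop),
      hμGinv v hv]

end ConjugationLaw

/-- Fix `z₀ ∈ ℍ` and let `u` be Haar-distributed on the group of unit
quaternions (formalized as a translation-invariant probability measure `μG`
supported on the unit sphere). Then `u z₀ u*` has the same law as
`Re(z₀) + |Im(z₀)|·S`, where `S` is uniformly distributed (formalized as a
conjugation-invariant probability measure `σ`) on the unit sphere of the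
purely imaginary quaternions. -/
theorem conjugation_orbit_law [MeasurableSpace ℍ[ℝ]] [BorelSpace ℍ[ℝ]] (z₀ : ℍ[ℝ])
    (μG : Measure ℍ[ℝ]) [IsProbabilityMeasure μG]
    (hμGsupp : μG {u : ℍ[ℝ] | ‖u‖ = 1} = 1)
    (hμGinv : ∀ v : ℍ[ℝ], ‖v‖ = 1 → Measure.map (fun u => v * u) μG = μG)
    (σ : Measure ℍ[ℝ]) [IsProbabilityMeasure σ]
    (hσsupp : σ {s : ℍ[ℝ] | s.re = 0 ∧ ‖s‖ = 1} = 1)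
    (hσinv : ∀ v : ℍ[ℝ], ‖v‖ = 1 → Measure.map (fun s => v * s * star v) σ = σ) :
    Measure.map (fun u => u * z₀ * star u) μG
      = Measure.map (fun s : ℍ[ℝ] => ((z₀.re : ℍ[ℝ]) + (‖z₀.im‖ : ℍ[ℝ]) * s)) σ := by
  obtain ⟨p, hp, him⟩ := exists_im_eq_norm_smul z₀
  have hμG : ∀ᵐ u ∂μG, ‖u‖ = 1 :=
    (mem_ae_iff_prob_eq_one (isClosed_eq continuous_norm continuous_const).measurableSet).2 hμGsupp
  have hσ : ∀ᵐ s ∂σ, s * s = -1 := by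
    have hS : MeasurableSet {s : ℍ[ℝ] | s.re = 0 ∧ ‖s‖ = 1} :=
      ((isClosed_eq continuous_re continuous_const).inter
        (isClosed_eq continuous_norm continuous_const)).measurableSet
    filter_upwards [(mem_ae_iff_prob_eq_one hS).2 hσsupp] with s hs
    exact mul_self_eq_neg_one_iff.2 hs
  have hconj : (fun u => u * z₀ * star u) =ᵐ[μG]
      (fun s => (z₀.re : ℍ[ℝ]) + (‖z₀.im‖ : ℍ[ℝ]) * s) ∘ (fun u => u * p * star u) := by
    filter_upwards [hμG] with u hu
    rw [Function.comp_apply, conj_eq_re_add_conj_im hu, coe_mul_eq_smul, ← smul_mul_assoc,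
      ← mul_smul_comm, ← him]
  rw [Measure.map_congr hconj, ← Measure.map_map (by fun_prop) (by fun_prop),
    map_conj_eq_of_conj_invariant hμG hμGinv hp hσ hσinv]
end

section
/- For r ≥ 0 with r ≠ 1, the value of (1/π)·∫_{-π}^{π} log|r - e^{iθ}|·sin²θ dθ equals r²/4 if r < 1, and equals 1/(4r²) + log r if r > 1. -/
/-! For `|s| < 1`, `log ‖1 - s e^{iθ}‖ = -∑ sⁿ cos (nθ) / n`. Since
`sin²θ = (1 - cos 2θ) / 2`, integrating this series against `sin²θ` over `[-π, π]` kills every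
term but `n = 2`, which gives `π s² / 4`. For `r < 1` this applies directly, because
`|r - e^{iθ}| = |1 - r e^{iθ}|`; for `r > 1` write `|r - e^{iθ}| = r |1 - r⁻¹ e^{iθ}|`, and the
extra `log r` contributes `π log r`. -/

open Real MeasureTheory

theorem integral_cos_int_mul (k : ℤ) :
    ∫ θ in (-π)..π, cos (k * θ) = if k = 0 then 2 * π else 0 := by
  split_ifs with hk
  · simp [hk]; ring
  · have hk' : (k : ℝ) ≠ 0 := Int.cast_ne_zero.mpr hk
    simp [intervalIntegral.integral_comp_mul_left (fun x => cos x) hk', integral_cos,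
      sin_int_mul_pi]

theorem integral_cos_nat_mul_mul_sin_sq (n : ℕ) :
    ∫ θ in (-π)..π, cos (n * θ) * sin θ ^ 2
      = if n = 0 then π else if n = 2 then -(π / 2) else 0 := by
  have product_to_sum : ∀ θ : ℝ, cos (n * θ) * sin θ ^ 2
      = cos ((n : ℤ) * θ) / 2 - cos (((n + 2 : ℤ) : ℝ) * θ) / 4
        - cos (((n - 2 : ℤ) : ℝ) * θ) / 4 := by
    intro θ
    push_cast
    rw [sin_sq, cos_sq θ, add_mul, sub_mul, cos_add, cos_sub]
    ring
  have hcos : ∀ (k : ℤ) (c : ℝ), IntervalIntegrable (fun θ : ℝ => cos (k * θ) / c) volume (-π) π :=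
    fun k c => (by fun_prop : Continuous _).intervalIntegrable _ _
  simp_rw [product_to_sum]
  rw [intervalIntegral.integral_sub ((hcos _ _).sub (hcos _ _)) (hcos _ _),
    intervalIntegral.integral_sub (hcos _ _) (hcos _ _)]
  simp only [intervalIntegral.integral_div, integral_cos_int_mul]
  rcases (by omega : n = 0 ∨ n = 2 ∨ (n ≠ 0 ∧ n ≠ 2)) with rfl | rfl | ⟨h0, h2⟩
  · norm_num
  · norm_num; ring
  · rw [if_neg (by omega), if_neg (by omega), if_neg (by omega), if_neg h0, if_neg h2]
    ring

-- The `n = 0` term is `s ^ 0 / 0 * cos 0 = 0`, as in the Taylor series of `-log (1 - z)`.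
theorem hasSum_log_norm_one_sub_ofReal_mul_exp {s : ℝ} (hs : |s| < 1) (θ : ℝ) :
    HasSum (fun n : ℕ => -(s ^ n / n * cos (n * θ)))
      (Real.log ‖1 - s * Complex.exp (θ * Complex.I)‖) := by
  have hz : ‖(s : ℂ) * Complex.exp (θ * Complex.I)‖ < 1 := by
    rwa [norm_mul, Complex.norm_exp_ofReal_mul_I, mul_one, Complex.norm_real, Real.norm_eq_abs]
  have hterm : ∀ n : ℕ, ((s * Complex.exp (θ * Complex.I)) ^ n / n).re
      = s ^ n / n * cos (n * θ) := by
    intro n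
    rw [mul_pow, ← Complex.exp_nat_mul, ← mul_assoc, mul_div_right_comm]
    norm_cast
    rw [Complex.re_ofReal_mul, Complex.exp_ofReal_mul_I_re]
  simpa [hterm, Complex.log_re] using
    (Complex.hasSum_re (Complex.hasSum_taylorSeries_neg_log hz)).neg

theorem integral_log_norm_one_sub_ofReal_mul_exp_mul_sin_sq {s : ℝ} (hs : |s| < 1) :
    ∫ θ in (-π)..π, Real.log ‖1 - s * Complex.exp (θ * Complex.I)‖ * sin θ ^ 2
      = π * s ^ 2 / 4 := by
  have bound : ∀ (n : ℕ) (θ : ℝ), ‖-(s ^ n / n * cos (n * θ)) * sin θ ^ 2‖ ≤ |s| ^ n := by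
    intro n θ
    simp only [norm_mul, norm_neg, norm_div, norm_pow, Real.norm_eq_abs, Nat.abs_cast, sq_abs]
    calc |s| ^ n / n * |cos (n * θ)| * sin θ ^ 2 ≤ |s| ^ n / n * 1 * 1 := by
          gcongr
          exacts [abs_cos_le_one _, sin_sq_le_one θ]
      _ ≤ |s| ^ n := by
          rcases n.eq_zero_or_pos with rfl | hn
          · simp
          · simpa using div_le_self (by positivity) (Nat.one_le_cast.mpr hn)
  have termwise := intervalIntegral.hasSum_integral_of_dominated_convergence
    (μ := volume) (a := -π) (b := π)
    (F := fun (n : ℕ) θ => -(s ^ n / n * cos (n * θ)) * sin θ ^ 2) (fun n _ => |s| ^ n)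
    (fun n => by fun_prop)
    (fun n => Filter.Eventually.of_forall fun θ _ => bound n θ)
    (Filter.Eventually.of_forall fun _ _ => summable_geometric_of_lt_one (abs_nonneg s) hs)
    intervalIntegrable_const
    (Filter.Eventually.of_forall fun θ _ =>
      (hasSum_log_norm_one_sub_ofReal_mul_exp hs θ).mul_right (sin θ ^ 2))
  have coeff : ∀ n : ℕ, ∫ θ in (-π)..π, -(s ^ n / n * cos (n * θ)) * sin θ ^ 2
      = if n = 2 then π * s ^ 2 / 4 else 0 := by
    intro n
    simp_rw [neg_mul, mul_assoc]
    rw [intervalIntegral.integral_neg, intervalIntegral.integral_const_mul,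
      integral_cos_nat_mul_mul_sin_sq]
    split_ifs <;> simp_all; ring
  rw [← termwise.tsum_eq, tsum_eq_single 2 (fun n hn => by rw [coeff, if_neg hn]), coeff,
    if_pos rfl]

theorem norm_ofReal_sub_eq_norm_one_sub_ofReal_mul (r : ℝ) {w : ℂ} (hw : ‖w‖ = 1) :
    ‖(r : ℂ) - w‖ = ‖1 - r * w‖ := by
  have hw_conj : w * (starRingEnd ℂ) w = 1 := by
    rw [Complex.mul_conj, Complex.normSq_eq_norm_sq, hw]; norm_num
  calc ‖(r : ℂ) - w‖ = ‖w‖ * ‖(starRingEnd ℂ) (w - r)‖ := by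
        rw [hw, one_mul, Complex.norm_conj, norm_sub_rev]
    _ = ‖1 - r * w‖ := by
        rw [← norm_mul, map_sub, Complex.conj_ofReal, mul_sub, hw_conj, mul_comm]

theorem norm_ofReal_sub_eq_abs_mul_norm_one_sub {r : ℝ} (hr : r ≠ 0) (w : ℂ) :
    ‖(r : ℂ) - w‖ = |r| * ‖1 - ((r⁻¹ : ℝ) : ℂ) * w‖ := by
  have hr' : (r : ℂ) ≠ 0 := Complex.ofReal_ne_zero.mpr hr
  rw [← Real.norm_eq_abs, ← Complex.norm_real, ← norm_mul]
  congr 1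
  push_cast
  field_simp

theorem integral_log_norm_ofReal_sub_exp_mul_sin_sq_of_abs_lt_one {r : ℝ} (hr : |r| < 1) :
    ∫ θ in (-π)..π, Real.log ‖(r : ℂ) - Complex.exp (θ * Complex.I)‖ * sin θ ^ 2
      = π * r ^ 2 / 4 := by
  simp only [norm_ofReal_sub_eq_norm_one_sub_ofReal_mul r (Complex.norm_exp_ofReal_mul_I _)]
  exact integral_log_norm_one_sub_ofReal_mul_exp_mul_sin_sq hr

theorem integral_log_norm_ofReal_sub_exp_mul_sin_sq_of_one_lt_abs {r : ℝ} (hr : 1 < |r|) :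
    ∫ θ in (-π)..π, Real.log ‖(r : ℂ) - Complex.exp (θ * Complex.I)‖ * sin θ ^ 2
      = π * (1 / (4 * r ^ 2) + Real.log |r|) := by
  have hr0 : r ≠ 0 := abs_pos.mp (one_pos.trans hr)
  have hne : ∀ θ : ℝ, ‖1 - ((r⁻¹ : ℝ) : ℂ) * Complex.exp (θ * Complex.I)‖ ≠ 0 := by
    intro θ
    refine right_ne_zero_of_mul (a := |r|) ?_
    rw [← norm_ofReal_sub_eq_abs_mul_norm_one_sub hr0, norm_ne_zero_iff, sub_ne_zero]
    intro h
    have := congrArg norm h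
    rw [Complex.norm_real, Real.norm_eq_abs, Complex.norm_exp_ofReal_mul_I] at this
    exact hr.ne' this
  have split : (fun θ : ℝ => Real.log ‖(r : ℂ) - Complex.exp (θ * Complex.I)‖ * sin θ ^ 2)
      = fun θ => Real.log |r| * sin θ ^ 2
          + Real.log ‖1 - ((r⁻¹ : ℝ) : ℂ) * Complex.exp (θ * Complex.I)‖ * sin θ ^ 2 := by
    ext θ
    rw [norm_ofReal_sub_eq_abs_mul_norm_one_sub hr0,
      Real.log_mul (abs_ne_zero.mpr hr0) (hne θ), add_mul]
  have hs : |r⁻¹| < 1 := by rw [abs_inv]; exact inv_lt_one_of_one_lt₀ hr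
  rw [split,
    intervalIntegral.integral_add ((by fun_prop : Continuous _).intervalIntegrable _ _) ?_,
    intervalIntegral.integral_const_mul, integral_log_norm_one_sub_ofReal_mul_exp_mul_sin_sq hs,
    integral_sin_sq, sin_neg, sin_pi]
  · field_simp
    ring
  · exact Continuous.intervalIntegrable (by fun_prop (disch := exact hne _)) _ _

/-- For `r ≥ 0`, `r ≠ 1`, the value of `(1/π) ∫_{-π}^{π} log|r - e^{iθ}| sin²θ dθ`
is `r²/4` if `r < 1` and `1/(4r²) + log r` if `r > 1`. -/
theorem integral_log_abs_sin_sq (r : ℝ) (hr : 0 ≤ r) (hr1 : r ≠ 1) :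
    (1 / π) * ∫ θ in (-π)..π,
        Real.log ‖(r : ℂ) - Complex.exp (θ * Complex.I)‖ * Real.sin θ ^ 2
      = if r < 1 then r ^ 2 / 4 else 1 / (4 * r ^ 2) + Real.log r := by
  rcases hr1.lt_or_gt with hlt | hgt
  · rw [if_pos hlt, integral_log_norm_ofReal_sub_exp_mul_sin_sq_of_abs_lt_one
      (by rwa [abs_of_nonneg hr])]
    field_simp
  · rw [if_neg hgt.not_gt, integral_log_norm_ofReal_sub_exp_mul_sin_sq_of_one_lt_abs
      (by rwa [abs_of_nonneg hr]), abs_of_nonneg hr]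
    field_simp
end

section
/- (1/π)·∫_{-π}^{π} log|1 - e^{iθ}|·sin²θ dθ = 1/4. -/
/-!
Write `L θ = log ‖1 - e^{iθ}‖ = log |2 sin (θ / 2)|`. Its mean over a period vanishes (the circle
average of `log ‖z - 1‖` over the unit circle), so with `sin² θ = (1 - cos 2θ) / 2` only
`-(1/2) ∫ L θ cos 2θ` survives. Integrating by parts against `sin 2θ / 2`, the boundary terms vanish
and `L' θ · sin 2θ / 2 = cos θ (1 + cos θ) / 2`, whose integral over `[-π, π]` is `π / 2`.
-/

open Real MeasureTheory intervalIntegral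

theorem log_norm_one_sub_exp_mul_I (θ : ℝ) :
    log ‖1 - Complex.exp (θ * Complex.I)‖ = log (2 * sin (θ / 2)) := by
  rw [norm_sub_rev, mul_comm, Complex.norm_exp_I_mul_ofReal_sub_one, Real.norm_eq_abs, log_abs]

theorem intervalIntegrable_log_two_mul_sin_half (a b : ℝ) :
    IntervalIntegrable (fun θ => log (2 * sin (θ / 2))) volume a b :=
  MeromorphicOn.intervalIntegrable_log (f := fun θ => 2 * sin (θ / 2)) fun _ _ => by fun_prop

theorem integral_log_two_mul_sin_half : ∫ θ in -π..π, log (2 * sin (θ / 2)) = 0 := by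
  have hmean := circleAverage_log_norm_sub_const₁ (a := 1) norm_one
  rw [circleAverage_def, smul_eq_zero, or_iff_right (by positivity)] at hmean
  have hper : Function.Periodic (fun θ : ℝ => log ‖circleMap 0 1 θ - 1‖) (2 * π) :=
    fun θ => by simp only [periodic_circleMap 0 1 θ]
  have hshift := hper.intervalIntegral_add_eq (-π) 0
  rw [zero_add, hmean, show -π + 2 * π = π by ring] at hshift
  simp_rw [← log_norm_one_sub_exp_mul_I, norm_sub_rev (1 : ℂ)]
  simpa [circleMap_zero] using hshift

theorem hasDerivAt_log_two_mul_sin_half {θ : ℝ} (h : sin (θ / 2) ≠ 0) :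
    HasDerivAt (fun θ => log (2 * sin (θ / 2))) (cos (θ / 2) / (2 * sin (θ / 2))) θ := by
  refine ((((hasDerivAt_id' θ).div_const 2).sin.const_mul 2).log
    (mul_ne_zero two_ne_zero h)).congr_deriv ?_
  ring

theorem continuous_log_two_mul_sin_half_mul_sin_two_mul :
    Continuous fun θ => log (2 * sin (θ / 2)) * sin (2 * θ) := by
  -- `sin 2θ` carries the factor `y = 2 sin (θ / 2)`, and `y * log y` is continuous at `y = 0`.
  have hfactor (θ : ℝ) : log (2 * sin (θ / 2)) * sin (2 * θ) =
      2 * sin (θ / 2) * log (2 * sin (θ / 2)) * (2 * cos (θ / 2) * cos θ) := by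
    rw [sin_two_mul, show θ = 2 * (θ / 2) by ring, sin_two_mul]
    ring_nf
  simp_rw [hfactor]
  exact (continuous_mul_log.comp (by fun_prop)).mul (by fun_prop)

theorem cos_half_div_two_mul_sin_half_mul_sin_two_mul {θ : ℝ} (h : sin (θ / 2) ≠ 0) :
    cos (θ / 2) / (2 * sin (θ / 2)) * sin (2 * θ) = cos θ * (1 + cos θ) := by
  have hsin : sin θ = 2 * sin (θ / 2) * cos (θ / 2) := by
    rw [← sin_two_mul]; ring_nf
  have hcos : 2 * cos (θ / 2) ^ 2 = 1 + cos θ := by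
    rw [cos_sq, show 2 * (θ / 2) = θ by ring]; ring
  rw [sin_two_mul, hsin, ← hcos]
  field_simp

theorem integral_cos_mul_one_add_cos : ∫ θ in -π..π, cos θ * (1 + cos θ) = π := by
  simp_rw [mul_one_add, ← sq]
  rw [intervalIntegral.integral_add (f := cos) (g := fun θ => cos θ ^ 2) intervalIntegrable_cos
    ((continuous_cos.pow 2).intervalIntegrable _ _), integral_cos, integral_cos_sq]
  simp

theorem integral_log_two_mul_sin_half_mul_cos_two_mul :
    ∫ θ in -π..π, log (2 * sin (θ / 2)) * cos (2 * θ) = -(π / 2) := by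
  set L : ℝ → ℝ := fun θ => log (2 * sin (θ / 2))
  have hL : IntervalIntegrable (fun θ => L θ * cos (2 * θ)) volume (-π) π :=
    (intervalIntegrable_log_two_mul_sin_half _ _).mul_continuousOn (by fun_prop)
  have hg : Continuous fun θ => cos θ * (1 + cos θ) / 2 := by fun_prop
  have hderiv : ∀ θ ∈ Set.Ioo (-π) π \ {0}, HasDerivAt (fun θ => L θ * sin (2 * θ) / 2)
      (L θ * cos (2 * θ) + cos θ * (1 + cos θ) / 2) θ := by
    rintro θ ⟨⟨hπθ, hθπ⟩, hθ⟩
    have hsin : sin (θ / 2) ≠ 0 := by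
      rw [Ne, sin_eq_zero_iff_of_lt_of_lt (by linarith) (by linarith)]
      simpa using hθ
    refine (((hasDerivAt_log_two_mul_sin_half hsin).mul
      (((hasDerivAt_id' θ).const_mul 2).sin)).div_const 2).congr_deriv ?_
    rw [← cos_half_div_two_mul_sin_half_mul_sin_two_mul hsin]
    ring
  have hFTC := integral_eq_of_hasDerivAt_off_countable_of_le _ _ (by linarith [pi_pos])
    (Set.countable_singleton 0)
    (continuous_log_two_mul_sin_half_mul_sin_two_mul.div_const 2).continuousOn hderiv
    (hL.add (hg.intervalIntegrable _ _))
  rw [intervalIntegral.integral_add hL (hg.intervalIntegrable _ _), intervalIntegral.integral_div,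
    integral_cos_mul_one_add_cos] at hFTC
  simp only [L, sin_pi_div_two, sin_two_pi, sin_neg, mul_zero, mul_neg, neg_zero, zero_div,
    sub_self] at hFTC
  linarith

/-- `(1/π) ∫_{-π}^{π} log|1 - e^{iθ}| sin²θ dθ = 1/4`. -/
theorem integral_log_abs_one_sub_exp_sin_sq :
    (1 / π) * ∫ θ in (-π)..π,
        Real.log ‖1 - Complex.exp (θ * Complex.I)‖ * Real.sin θ ^ 2
      = 1 / 4 := by
  have hsplit (θ : ℝ) : log ‖1 - Complex.exp (θ * Complex.I)‖ * sin θ ^ 2 =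
      log (2 * sin (θ / 2)) / 2 - log (2 * sin (θ / 2)) * cos (2 * θ) / 2 := by
    rw [log_norm_one_sub_exp_mul_I, sin_sq_eq_half_sub]
    ring
  have hL := intervalIntegrable_log_two_mul_sin_half (-π) π
  simp_rw [hsplit]
  rw [intervalIntegral.integral_sub (hL.div_const 2)
      ((hL.mul_continuousOn (by fun_prop)).div_const 2),
    intervalIntegral.integral_div, intervalIntegral.integral_div, integral_log_two_mul_sin_half,
    integral_log_two_mul_sin_half_mul_cos_two_mul]
  field_simp
  ring
end

section
/- For 0 ≤ a < 1 and n ∈ ℤ, ∫_{-π}^{π} (1-a²)/(a²+1-2a·cos θ) · e^{inθ} dθ = 2π·a^{|n|}. -/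
/-! The kernel is the Poisson kernel of the unit disc at the point `a`, since
`|e^{iθ} - a|² = a² + 1 - 2a cos θ`. The Poisson integral formula for the holomorphic function
`z ↦ z ^ n` therefore gives the coefficient `a ^ n` for `n ≥ 0`, and the kernel is even in `θ`,
which gives the negative coefficients. -/

open Real Metric

theorem Real.circleAverage_eq_integral_neg_pi_pi {E : Type*} [NormedAddCommGroup E]
    [NormedSpace ℝ E] (f : ℂ → E) (c : ℂ) (R : ℝ) :
    circleAverage f c R = (2 * π)⁻¹ • ∫ θ in -π..π, f (circleMap c R θ) := by
  have hper : Function.Periodic (fun θ ↦ f (circleMap c R θ)) (2 * π) :=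
    fun θ ↦ by simp [periodic_circleMap c R θ]
  rw [circleAverage_def, ← zero_add (2 * π), ← hper.intervalIntegral_add_eq (-π) 0]
  ring_nf

theorem poissonKernel_zero_ofReal_circleMap (a θ : ℝ) :
    poissonKernel 0 a (circleMap 0 1 θ) = (1 - a ^ 2) / (a ^ 2 + 1 - 2 * a * cos θ) := by
  have hnorm : ‖circleMap 0 1 θ - a‖ ^ 2 = a ^ 2 + 1 - 2 * a * cos θ := by
    have hre : (circleMap 0 1 θ - a).re = cos θ - a := by simp [circleMap_zero]
    have him : (circleMap 0 1 θ - a).im = sin θ := by simp [circleMap_zero]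
    rw [← Complex.normSq_eq_norm_sq, Complex.normSq_apply, hre, him]
    linear_combination sin_sq_add_cos_sq θ
  simp [poissonKernel, hnorm]

theorem integral_poissonKernel_mul_exp_nat {a : ℝ} (ha : |a| < 1) (n : ℕ) :
    ∫ θ in -π..π, (((1 - a ^ 2) / (a ^ 2 + 1 - 2 * a * cos θ) : ℝ) : ℂ) *
        Complex.exp (n * θ * Complex.I) = 2 * π * a ^ n := by
  have hw : (a : ℂ) ∈ ball (0 : ℂ) 1 := by simpa using ha
  have hpoisson := (differentiable_pow n).diffContOnCl.circleAverage_poissonKernel_smul hw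
  have hexp (θ : ℝ) : circleMap 0 1 θ ^ n = Complex.exp (n * θ * Complex.I) := by
    rw [circleMap_zero, Complex.ofReal_one, one_mul, ← Complex.exp_nat_mul, mul_assoc]
  simp only [circleAverage_eq_integral_neg_pi_pi, Pi.smul_apply',
    poissonKernel_zero_ofReal_circleMap, hexp, Complex.real_smul] at hpoisson
  have h2pi : (2 * π : ℂ) * ((2 * π)⁻¹ : ℝ) = 1 := by push_cast; field_simp
  rw [← hpoisson, ← mul_assoc, h2pi, one_mul]

/-- Poisson kernel Fourier coefficients: for `0 ≤ a < 1` and `n ∈ ℤ`,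
`∫_{-π}^{π} (1-a²)/(a²+1-2a cos θ) e^{inθ} dθ = 2π a^{|n|}`. -/
theorem poisson_kernel_fourier (a : ℝ) (ha0 : 0 ≤ a) (ha1 : a < 1) (n : ℤ) :
    ∫ θ in (-π)..π,
        (((1 - a ^ 2) / (a ^ 2 + 1 - 2 * a * Real.cos θ) : ℝ) : ℂ)
          * Complex.exp (n * θ * Complex.I)
      = ((2 * π * a ^ n.natAbs : ℝ) : ℂ) := by
  have ha : |a| < 1 := abs_lt.2 ⟨by linarith, ha1⟩
  obtain ⟨m, rfl | rfl⟩ := n.eq_nat_or_neg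
  · simpa using integral_poissonKernel_mul_exp_nat ha m
  · have h := integral_poissonKernel_mul_exp_nat ha m
    have hsymm := intervalIntegral.integral_comp_neg (a := -π) (b := π) (E := ℂ)
    simp only [neg_neg] at hsymm
    simpa [cos_neg] using (hsymm _).trans h
end

section
/- There is no quadratic potential V(z) = a₁z² + a₂·conj(z)² + a₃·z·conj(z) taking real values on ℂ such that the function 2U^ν + V is constant on the unit circle and everywhere ≥ that constant, where U^ν is the logarithmic potential of the measure dν(z) = 2Im(z)² dσ(z) on S¹. Equivalently, ν is not the equilibrium measure of any real quadratic potential. -/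
/-!
The real part of `V` is homogeneous of degree two, so comparing `2U^ν + V` at `i` (on the circle)
with its values at `0` and `3i` gives `9 U^ν(i) ≤ U^ν(3i)`. On the imaginary axis
`2π U^ν(ti) = -∫ log(1 + t² - 2t sin θ) sin² θ dθ`, and averaging over `θ ↦ -θ` replaces the
logarithm by `½ log((1 + t²)² - 4t² sin² θ)`. For `t = 3` this is at least `½ log 64`, so
`U^ν(3i) ≤ -(3/2) log 2`; for `t = 1` it is `log 2 + ½ log(1 - sin² θ)`, and two terms of the
series of `log(1 - u)` give `U^ν(i) > -(log 2)/6`.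
-/

open Real

/-- The logarithmic potential of the measure `dν(z) = 2 Im(z)² dσ(z)` on the unit
circle (σ the uniform probability measure, parametrized by `θ ↦ e^{iθ}`). -/
noncomputable def Unu (x : ℂ) : ℝ :=
  (1 / (2 * π)) * ∫ θ in (-π)..π,
    (-Real.log (‖x - Complex.exp (θ * Complex.I)‖)) * (2 * Real.sin θ ^ 2)

open intervalIntegral MeasureTheory

theorem sum_range_pow_div_le_neg_log_one_sub {u : ℝ} (h₀ : 0 ≤ u) (h₁ : u < 1) (n : ℕ) :
    ∑ i ∈ Finset.range n, u ^ (i + 1) / (i + 1) ≤ -log (1 - u) :=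
  sum_le_hasSum _ (fun i _ => by positivity)
    (Real.hasSum_pow_div_log_of_abs_lt_one (by rwa [abs_of_nonneg h₀]))

theorem log_one_sub_le {u : ℝ} (h₀ : 0 ≤ u) (h₁ : u < 1) : log (1 - u) ≤ -u - u ^ 2 / 2 := by
  have := sum_range_pow_div_le_neg_log_one_sub h₀ h₁ 2
  rw [Finset.sum_range_succ, Finset.sum_range_one] at this
  norm_num at this
  linarith

theorem IntervalIntegrable.comp_neg_symmetric {f : ℝ → ℝ} {a : ℝ}
    (hf : IntervalIntegrable f volume (-a) a) :
    IntervalIntegrable (fun x => f (-x)) volume (-a) a := by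
  simpa using ((IntervalIntegrable.iff_comp_neg enorm_ne_top).1 hf).symm

theorem two_mul_integral_eq_integral_add_comp_neg {f : ℝ → ℝ} {a : ℝ}
    (hf : IntervalIntegrable f volume (-a) a) :
    2 * ∫ x in -a..a, f x = ∫ x in -a..a, (f x + f (-x)) := by
  rw [integral_add hf hf.comp_neg_symmetric, integral_comp_neg, neg_neg]
  ring

theorem ae_cos_ne_zero : ∀ᵐ θ : ℝ, Real.cos θ ≠ 0 := by
  have hc : {θ : ℝ | Real.cos θ = 0}.Countable :=
    (Set.countable_range fun k : ℤ => (2 * k + 1) * π / 2).mono fun θ h => by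
      obtain ⟨k, rfl⟩ := Real.cos_eq_zero_iff.1 h
      exact ⟨k, rfl⟩
  simpa [ae_iff] using hc.measure_zero volume

theorem integral_sin_pow_add_two_neg_pi_pi (n : ℕ) :
    ∫ θ in -π..π, sin θ ^ (n + 2) = (n + 1) / (n + 2) * ∫ θ in -π..π, sin θ ^ n := by
  simp [integral_sin_pow]

theorem integral_sin_sq_neg_pi_pi : ∫ θ in -π..π, sin θ ^ 2 = π := by simp

theorem integral_sin_pow_four_neg_pi_pi : ∫ θ in -π..π, sin θ ^ 4 = 3 * π / 4 := by
  rw [integral_sin_pow_add_two_neg_pi_pi 2, integral_sin_sq_neg_pi_pi]; ring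

theorem integral_sin_pow_six_neg_pi_pi : ∫ θ in -π..π, sin θ ^ 6 = 5 * π / 8 := by
  rw [integral_sin_pow_add_two_neg_pi_pi 4, integral_sin_pow_four_neg_pi_pi]; norm_num; ring

theorem sq_norm_ofReal_mul_I_sub_exp (t θ : ℝ) :
    ‖(t : ℂ) * Complex.I - Complex.exp (θ * Complex.I)‖ ^ 2 = 1 + t ^ 2 - 2 * t * sin θ := by
  rw [Complex.sq_norm, Complex.normSq_apply]
  simp only [Complex.sub_re, Complex.sub_im, Complex.mul_re, Complex.mul_im, Complex.ofReal_re,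
    Complex.ofReal_im, Complex.I_re, Complex.I_im, Complex.exp_ofReal_mul_I_re,
    Complex.exp_ofReal_mul_I_im]
  nlinarith [sin_sq_add_cos_sq θ]

noncomputable def sinSqLogIntegral (t : ℝ) : ℝ :=
  ∫ θ in -π..π, log (1 + t ^ 2 - 2 * t * sin θ) * sin θ ^ 2

theorem Unu_ofReal_mul_I (t : ℝ) : Unu (t * Complex.I) = -sinSqLogIntegral t / (2 * π) := by
  have hlog (θ : ℝ) : log ‖(t : ℂ) * Complex.I - Complex.exp (θ * Complex.I)‖
      = log (1 + t ^ 2 - 2 * t * sin θ) / 2 := by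
    rw [← sq_norm_ofReal_mul_I_sub_exp, log_pow]; push_cast; ring
  have hintegrand (θ : ℝ) : -(log (1 + t ^ 2 - 2 * t * sin θ) / 2) * (2 * sin θ ^ 2)
      = -(log (1 + t ^ 2 - 2 * t * sin θ) * sin θ ^ 2) := by ring
  simp only [Unu, hlog, hintegrand, intervalIntegral.integral_neg, sinSqLogIntegral]
  ring

theorem sinSqLogIntegral_one_lt : sinSqLogIntegral 1 < π / 3 * log 2 := by
  set f : ℝ → ℝ := fun θ => log (1 + 1 ^ 2 - 2 * 1 * sin θ) * sin θ ^ 2 with hf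
  by_cases hint : IntervalIntegrable f volume (-π) π
  swap
  · rw [sinSqLogIntegral, intervalIntegral.integral_undef hint]
    positivity
  -- Only a.e.: where `cos θ = 0` one factor vanishes and `log 0 = 0`.
  have hbound : ∀ᵐ θ : ℝ, f θ + f (-θ) ≤ 2 * log 2 * sin θ ^ 2 - sin θ ^ 4 - sin θ ^ 6 / 2 := by
    filter_upwards [ae_cos_ne_zero] with θ hcos
    have hsin : sin θ ^ 2 < 1 := by
      nlinarith [sin_sq_add_cos_sq θ, pow_pos (abs_pos.2 hcos) 2, sq_abs (cos θ)]
    have hsum : log (1 + 1 ^ 2 - 2 * 1 * sin θ) + log (1 + 1 ^ 2 - 2 * 1 * sin (-θ))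
        = 2 * log 2 + log (1 - sin θ ^ 2) := by
      rw [sin_neg, ← log_mul (by nlinarith) (by nlinarith),
        show (2 : ℝ) * log 2 = log 4 by rw [show (4 : ℝ) = 2 ^ 2 by norm_num, log_pow]; norm_num,
        ← log_mul (by norm_num) (by linarith)]
      ring_nf
    calc f θ + f (-θ)
        = (log (1 + 1 ^ 2 - 2 * 1 * sin θ) + log (1 + 1 ^ 2 - 2 * 1 * sin (-θ))) * sin θ ^ 2 := by
          simp only [hf, sin_neg]; ring
      _ ≤ (2 * log 2 - sin θ ^ 2 - (sin θ ^ 2) ^ 2 / 2) * sin θ ^ 2 := by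
          rw [hsum]
          gcongr
          linarith [log_one_sub_le (sq_nonneg (sin θ)) hsin]
      _ = 2 * log 2 * sin θ ^ 2 - sin θ ^ 4 - sin θ ^ 6 / 2 := by ring
  have hrhs : ∫ θ in -π..π, (2 * log 2 * sin θ ^ 2 - sin θ ^ 4 - sin θ ^ 6 / 2)
      = 2 * π * log 2 - 17 * π / 16 := by
    rw [intervalIntegral.integral_sub, intervalIntegral.integral_sub, intervalIntegral.integral_const_mul,
      intervalIntegral.integral_div, integral_sin_pow_four_neg_pi_pi, integral_sin_pow_six_neg_pi_pi,
      integral_sin_sq_neg_pi_pi]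
    · ring
    all_goals exact Continuous.intervalIntegrable (by fun_prop) _ _
  have hmono := intervalIntegral.integral_mono_ae (by linarith [pi_pos])
    (hint.add hint.comp_neg_symmetric) ((by fun_prop : Continuous fun θ =>
      2 * log 2 * sin θ ^ 2 - sin θ ^ 4 - sin θ ^ 6 / 2).intervalIntegrable _ _) hbound
  rw [← two_mul_integral_eq_integral_add_comp_neg hint, hrhs] at hmono
  have hlog2_lt : log 2 < 51 / 64 := by linarith [log_two_lt_d9]
  change ∫ θ in -π..π, f θ < _
  nlinarith [mul_lt_mul_of_pos_left hlog2_lt pi_pos]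

theorem three_mul_pi_mul_log_two_le_sinSqLogIntegral_three :
    3 * π * log 2 ≤ sinSqLogIntegral 3 := by
  set f : ℝ → ℝ := fun θ => log (1 + 3 ^ 2 - 2 * 3 * sin θ) * sin θ ^ 2 with hf
  have hint : IntervalIntegrable f volume (-π) π := by
    have hpos (θ : ℝ) : 1 + 3 ^ 2 - 2 * 3 * sin θ ≠ 0 := by nlinarith [sin_le_one θ]
    exact ((Continuous.log (by fun_prop) hpos).mul (by fun_prop)).intervalIntegrable _ _
  have hbound (θ : ℝ) : 6 * log 2 * sin θ ^ 2 ≤ f θ + f (-θ) := by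
    have hsum : 6 * log 2 ≤ log (1 + 3 ^ 2 - 2 * 3 * sin θ) + log (1 + 3 ^ 2 - 2 * 3 * sin (-θ)) := by
      rw [sin_neg, ← log_mul (by nlinarith [sin_le_one θ]) (by nlinarith [neg_one_le_sin θ]),
        show (6 : ℝ) * log 2 = log 64 by rw [show (64 : ℝ) = 2 ^ 6 by norm_num, log_pow]; norm_num]
      exact log_le_log (by norm_num) (by nlinarith [sin_sq_le_one θ])
    calc 6 * log 2 * sin θ ^ 2
        ≤ (log (1 + 3 ^ 2 - 2 * 3 * sin θ) + log (1 + 3 ^ 2 - 2 * 3 * sin (-θ))) * sin θ ^ 2 := by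
          gcongr
      _ = f θ + f (-θ) := by simp only [hf, sin_neg]; ring
  have hmono := intervalIntegral.integral_mono_on (by linarith [pi_pos])
    ((by fun_prop : Continuous fun θ => 6 * log 2 * sin θ ^ 2).intervalIntegrable _ _)
    (hint.add hint.comp_neg_symmetric) fun θ _ => hbound θ
  rw [← two_mul_integral_eq_integral_add_comp_neg hint, intervalIntegral.integral_const_mul,
    integral_sin_sq_neg_pi_pi] at hmono
  change _ ≤ ∫ θ in -π..π, f θ
  linarith

theorem Unu_zero : Unu 0 = 0 := by simp [Unu]

theorem neg_log_two_div_six_lt_Unu_I : -(log 2 / 6) < Unu Complex.I := by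
  have h := Unu_ofReal_mul_I 1
  rw [Complex.ofReal_one, one_mul] at h
  rw [h, lt_div_iff₀ (by positivity)]
  linarith [sinSqLogIntegral_one_lt]

theorem Unu_three_mul_I_le : Unu (3 * Complex.I) ≤ -(3 * log 2 / 2) := by
  have h := Unu_ofReal_mul_I 3
  rw [Complex.ofReal_ofNat] at h
  rw [h, div_le_iff₀ (by positivity)]
  linarith [three_mul_pi_mul_log_two_le_sinSqLogIntegral_three]

theorem re_quadratic_ofReal_mul (a₁ a₂ a₃ z : ℂ) (t : ℝ) :
    (a₁ * (t * z) ^ 2 + a₂ * (starRingEnd ℂ (t * z)) ^ 2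
      + a₃ * (t * z) * starRingEnd ℂ (t * z)).re
      = t ^ 2 * (a₁ * z ^ 2 + a₂ * (starRingEnd ℂ z) ^ 2 + a₃ * z * starRingEnd ℂ z).re := by
  rw [map_mul, Complex.conj_ofReal, ← Complex.re_ofReal_mul]
  push_cast
  ring_nf

/-- There is no real-valued quadratic potential
`V(z) = a₁ z² + a₂ conj(z)² + a₃ z conj(z)` such that `2U^ν + V` is constant on the
unit circle and everywhere at least that constant, i.e. `ν` is not the equilibrium
measure of any real quadratic potential. -/
theorem no_quadratic_potential_for_nu :
    ¬ ∃ (a₁ a₂ a₃ : ℂ),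
      (∀ z : ℂ, (a₁ * z ^ 2 + a₂ * (starRingEnd ℂ z) ^ 2
          + a₃ * z * starRingEnd ℂ z).im = 0) ∧
      ∃ c : ℝ,
        (∀ z : ℂ, ‖z‖ = 1 →
          2 * Unu z + (a₁ * z ^ 2 + a₂ * (starRingEnd ℂ z) ^ 2
            + a₃ * z * starRingEnd ℂ z).re = c) ∧
        (∀ z : ℂ,
          c ≤ 2 * Unu z + (a₁ * z ^ 2 + a₂ * (starRingEnd ℂ z) ^ 2
            + a₃ * z * starRingEnd ℂ z).re) := by
  rintro ⟨a₁, a₂, a₃, -, c, hcircle, hge⟩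
  have hI := hcircle Complex.I Complex.norm_I
  have h0 : c ≤ 0 := by simpa [Unu_zero] using hge 0
  have h3 := hge ((3 : ℝ) * Complex.I)
  rw [re_quadratic_ofReal_mul, Complex.ofReal_ofNat] at h3
  linarith [neg_log_two_div_six_lt_Unu_I, Unu_three_mul_I_le]
end
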